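/- Define P_{n,k,l}(x) = ∑_{s=0}^{l} (-1)^s C(n-k, s) C(n-s-1, l-s) x^{n-2s}. Then for integers n ≥ 1, 0 ≤ k ≤ n-1, and any integer l, the sum ∑_{s=0}^{n} (-1)^s P_{n,k+1,s-1}(x) P_{n+1,s+1,l}(x) equals (-1)^{k+1} x^3 (δ_{k,l} + δ_{k,l-1}). -/

import Mathlib

/-- Binomial coefficient C(a,b) for integer arguments, with the convention
    C(a,b) = 0 when b < 0 or b > a. -/
def intChoose (a b : ℤ) : ℤ :=
  if 0 ≤ b ∧ b ≤ a then (a.toNat.choose b.toNat : ℤ) else 0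

/-- P_{n,k,l}(x) = ∑_{s=0}^{l} (-1)^s C(n-k,s) C(n-s-1,l-s) x^{n-2s}, as a function of
    an (invertible) field element x; for l < 0 all terms vanish (the sum degenerates to
    the single s = 0 term containing C(n-1,l) = 0), so P_{n,k,l} = 0 for l < 0. -/
def Ppoly {K : Type*} [Field K] (x : K) (n k l : ℤ) : K :=
  ∑ s ∈ Finset.range (l.toNat + 1),
    (-1 : K) ^ s * (intChoose (n - k) (s : ℤ) : K) *
      (intChoose (n - (s : ℤ) - 1) (l - (s : ℤ)) : K) * x ^ (n - 2 * (s : ℤ))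

/-!
Expanding both factors, the sum over `s` only involves the binomial coefficients
`C(n-a-1, s-1-a) C(n-s, b)`, and the alternating sum of these is `(-1)^(a+1) δ_{b, n-1-a}`
(binomial inversion). The triple sum thus collapses to a single sum over `a`, in which the powers
of `x` combine to `x³`, leaving `(-1)^n x³ ∑_a (-1)^a C(n-k-1, a) C(a+1, n-l)`. This alternating
sum is the coefficient of `X^(n-l)` in `(X+1)(1-(X+1))^(n-k-1) = (X+1)(-X)^(n-k-1)`.
-/

open Finset

theorem intChoose_of_neg {a b : ℤ} (h : b < 0) : intChoose a b = 0 :=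
  if_neg fun hb => by omega

theorem intChoose_of_lt {a b : ℤ} (h : a < b) : intChoose a b = 0 :=
  if_neg fun hb => by omega

@[simp, norm_cast]
theorem intChoose_natCast (m j : ℕ) : intChoose m j = m.choose j := by
  unfold intChoose
  split_ifs with h
  · simp
  · rw [Nat.choose_eq_zero_of_lt (by omega), Nat.cast_zero]

theorem intChoose_natCast_sub (m : ℕ) (b : ℤ) : intChoose m (m - b) = intChoose m b := by
  rcases lt_or_ge b 0 with hb | hb
  · rw [intChoose_of_lt (by omega), intChoose_of_neg hb]
  rcases lt_or_ge (m : ℤ) b with hmb | hmb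
  · rw [intChoose_of_neg (by omega), intChoose_of_lt hmb]
  lift b to ℕ using hb
  rw [← Nat.cast_sub (by omega), intChoose_natCast, intChoose_natCast,
    Nat.choose_symm (by omega)]

section
open Polynomial

theorem sum_range_neg_one_pow_mul_choose_mul_choose_sub (m b : ℕ) :
    ∑ t ∈ range (m + 1), (-1 : ℤ) ^ t * m.choose t * (m - t).choose b =
      if b = m then 1 else 0 := by
  have h : (X : ℤ[X]) ^ m =
      ∑ t ∈ range (m + 1), C ((-1) ^ t * (m.choose t : ℤ)) * (X + 1) ^ (m - t) := by
    rw [show (X : ℤ[X]) ^ m = (-1 + (X + 1)) ^ m by ring, add_pow]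
    refine sum_congr rfl fun t _ => ?_
    simp only [C_mul, C_pow, map_neg, map_one, map_natCast]
    ring
  simpa only [coeff_X_pow, finsetSum_coeff, coeff_C_mul, coeff_X_add_one_pow, mul_assoc,
    eq_comm] using congrArg (coeff · b) h

theorem sum_range_neg_one_pow_mul_choose_mul_choose_succ (m j : ℕ) :
    ∑ a ∈ range (m + 1), (-1 : ℤ) ^ a * m.choose a * (a + 1).choose j =
      (-1) ^ m * ((if j = m then 1 else 0) + if j = m + 1 then 1 else 0) := by
  have h : C ((-1 : ℤ) ^ m) * (X ^ m + X ^ (m + 1)) =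
      ∑ a ∈ range (m + 1), C ((-1) ^ a * (m.choose a : ℤ)) * (X + 1) ^ (a + 1) := by
    rw [show C ((-1 : ℤ) ^ m) * (X ^ m + X ^ (m + 1)) = (X + 1) * (-(X + 1) + 1) ^ m by
      simp only [C_pow, map_neg, map_one]; ring, add_pow, mul_sum]
    refine sum_congr rfl fun a _ => ?_
    rw [neg_pow]
    simp only [C_mul, C_pow, map_neg, map_one, map_natCast]
    ring
  simpa only [coeff_X_pow, finsetSum_coeff, coeff_C_mul, coeff_add, coeff_X_add_one_pow,
    mul_assoc, eq_comm] using congrArg (coeff · j) h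

end

theorem sum_range_neg_one_pow_mul_choose_mul_intChoose_succ (m : ℕ) (j : ℤ) :
    ∑ a ∈ range (m + 1), (-1 : ℤ) ^ a * m.choose a * intChoose (a + 1 : ℤ) j =
      (-1) ^ m * ((if j = m then 1 else 0) + if j = m + 1 then 1 else 0) := by
  rcases lt_or_ge j 0 with hj | hj
  · simp only [intChoose_of_neg hj, mul_zero, sum_const_zero]
    rw [if_neg (by omega), if_neg (by omega)]
    ring
  lift j to ℕ using hj
  simp only [← Nat.cast_succ, intChoose_natCast, sum_range_neg_one_pow_mul_choose_mul_choose_succ]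
  norm_cast

theorem sum_range_neg_one_pow_mul_intChoose_mul_intChoose {n a : ℕ} (ha : a < n) (b : ℕ) :
    ∑ s ∈ range (n + 1),
        (-1 : ℤ) ^ s * intChoose (n - a - 1) (s - 1 - a) * intChoose (n - s) b =
      if b = n - 1 - a then (-1) ^ (a + 1) else 0 := by
  obtain ⟨m, rfl⟩ : ∃ m, n = a + 1 + m := ⟨n - 1 - a, by omega⟩
  rw [show a + 1 + m + 1 = (a + 1) + (m + 1) by ring, sum_range_add,
    sum_eq_zero fun s hs => by rw [intChoose_of_neg (by rw [mem_range] at hs; omega), mul_zero, zero_mul],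
    zero_add]
  calc _ = ∑ t ∈ range (m + 1),
          (-1 : ℤ) ^ (a + 1) * ((-1) ^ t * m.choose t * (m - t).choose b) :=
        sum_congr rfl fun t ht => by
          rw [show ((a + 1 + m : ℕ) : ℤ) - a - 1 = m by push_cast; ring,
            show ((a + 1 + t : ℕ) : ℤ) - 1 - a = t by push_cast; ring,
            show ((a + 1 + m : ℕ) : ℤ) - (a + 1 + t : ℕ) = (m - t : ℕ) by rw [mem_range] at ht; omega]
          simp only [intChoose_natCast]
          ring
    _ = _ := by
        rw [← mul_sum, sum_range_neg_one_pow_mul_choose_mul_choose_sub]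
        split_ifs <;> simp_all

section
variable {K : Type*} [Field K]

theorem Ppoly_eq_sum_range (x : K) (n k l : ℤ) {N : ℕ} (hN : n - k < N) :
    Ppoly x n k l = ∑ a ∈ range N, (-1 : K) ^ a * (intChoose (n - k) a : K) *
      (intChoose (n - a - 1) (l - a) : K) * x ^ (n - 2 * (a : ℤ)) := by
  rw [Ppoly, ← eventually_constant_sum (N := l.toNat + 1) ?_ (le_max_left _ N),
    eventually_constant_sum (N := N) ?_ (le_max_right _ _)]
  · intro a ha
    rw [intChoose_of_lt (show n - k < a by omega), Int.cast_zero, mul_zero, zero_mul, zero_mul]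
  · intro a ha
    rw [intChoose_of_neg (show l - a < 0 by omega), Int.cast_zero, mul_zero, zero_mul]

theorem Ppoly_add_one_sub_one (x : K) {n k : ℕ} (hk : k < n) (s : ℕ) :
    Ppoly x n (k + 1) (s - 1) = ∑ a ∈ range (n - k), (-1 : K) ^ a * ((n - 1 - k).choose a : K) *
      (intChoose (n - a - 1) (s - 1 - a) : K) * x ^ (n - 2 * (a : ℤ)) := by
  rw [Ppoly_eq_sum_range x _ _ _ (N := n - k) (by omega)]
  refine sum_congr rfl fun a _ => ?_
  rw [show (n : ℤ) - (k + 1) = (n - 1 - k : ℕ) by omega, intChoose_natCast, Int.cast_natCast]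

theorem Ppoly_add_one_add_one (x : K) (n s : ℕ) (l : ℤ) :
    Ppoly x (n + 1) (s + 1) l = ∑ b ∈ range (n + 1), (-1 : K) ^ b * (intChoose (n - s) b : K) *
      (intChoose (n - b) (l - b) : K) * x ^ (n + 1 - 2 * (b : ℤ)) := by
  rw [Ppoly_eq_sum_range x _ _ _ (N := n + 1) (by omega)]
  refine sum_congr rfl fun b _ => ?_
  rw [add_sub_add_right_eq_sub, sub_right_comm, add_sub_cancel_right]

theorem sum_neg_one_pow_mul_Ppoly_mul_Ppoly {x : K} (hx : x ≠ 0) {n k : ℕ} (hk : k < n)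
    (l : ℤ) :
    ∑ s ∈ range (n + 1), (-1 : K) ^ s * Ppoly x n (k + 1) (s - 1) * Ppoly x (n + 1) (s + 1) l =
      (-1) ^ n * x ^ 3 * ∑ a ∈ range (n - k),
        (-1 : K) ^ a * ((n - 1 - k).choose a : K) * (intChoose (a + 1 : ℤ) (n - l) : K) := by
  simp_rw [Ppoly_add_one_sub_one x hk, mul_sum, sum_mul]
  rw [sum_comm]
  refine sum_congr rfl fun a ha => ?_
  have ha : a < n := by rw [mem_range] at ha; omega
  simp_rw [Ppoly_add_one_add_one, mul_sum]
  rw [sum_comm]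
  calc _ = ∑ b ∈ range (n + 1),
          (-1 : K) ^ a * ((n - 1 - k).choose a : K) * x ^ (n - 2 * (a : ℤ)) *
          ((-1 : K) ^ b * (intChoose (n - b) (l - b) : K) * x ^ (n + 1 - 2 * (b : ℤ))) *
          ((∑ s ∈ range (n + 1), (-1 : ℤ) ^ s * intChoose (n - a - 1) (s - 1 - a) *
            intChoose (n - s) b : ℤ) : K) := by
        refine sum_congr rfl fun b _ => ?_
        push_cast
        rw [mul_sum]
        exact sum_congr rfl fun s _ => by ring
    _ = _ := by
        simp only [sum_range_neg_one_pow_mul_intChoose_mul_intChoose ha, Int.cast_ite,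
          Int.cast_zero, mul_ite, mul_zero, sum_ite_eq', mem_range,
          if_pos (show n - 1 - a < n + 1 by omega)]
        have hx3 :
            x ^ (n - 2 * (a : ℤ)) * x ^ (n + 1 - 2 * ((n - 1 - a : ℕ) : ℤ)) = x ^ 3 := by
          rw [← zpow_add₀ hx, ← zpow_natCast]
          congr 1
          omega
        have hsign : (-1 : K) ^ n = (-1) ^ (n - 1 - a) * (-1) ^ (a + 1) := by
          rw [← pow_add]
          congr 1
          omega
        have hchoose : intChoose (n - (n - 1 - a : ℕ)) (l - (n - 1 - a : ℕ)) =
            intChoose (a + 1 : ℤ) (n - l) := by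
          rw [show (n : ℤ) - (n - 1 - a : ℕ) = (a + 1 : ℕ) by omega,
            ← intChoose_natCast_sub, Nat.cast_succ]
          congr 1
          omega
        rw [hchoose, ← hx3, hsign]
        push_cast
        ring

end

/-- ∑_{s=0}^{n} (-1)^s P_{n,k+1,s-1}(x) P_{n+1,s+1,l}(x)
      = (-1)^{k+1} x³ (δ_{k,l} + δ_{k,l-1}), for n ≥ 1, 0 ≤ k ≤ n-1, any integer l. -/
theorem Ppoly_convolution_two {K : Type*} [Field K] (x : K) (hx : x ≠ 0)
    (n k : ℕ) (hn : 1 ≤ n) (hk : k ≤ n - 1) (l : ℤ) :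
    ∑ s ∈ Finset.range (n + 1),
        (-1 : K) ^ s * Ppoly x (n : ℤ) ((k : ℤ) + 1) ((s : ℤ) - 1) *
          Ppoly x ((n : ℤ) + 1) ((s : ℤ) + 1) l
      = (-1 : K) ^ (k + 1) * x ^ 3 *
          ((if (k : ℤ) = l then 1 else 0) + (if (k : ℤ) = l - 1 then 1 else 0)) := by
  have hkn : k < n := by omega
  have hsum := congrArg (Int.cast : ℤ → K)
    (sum_range_neg_one_pow_mul_choose_mul_intChoose_succ (n - 1 - k) (n - l))
  push_cast at hsum
  have hsign : (-1 : K) ^ (k + 1) = (-1) ^ n * (-1) ^ (n - 1 - k) := by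
    rw [← pow_add]
    exact neg_one_pow_congr (by rw [Nat.even_iff, Nat.even_iff]; omega)
  rw [sum_neg_one_pow_mul_Ppoly_mul_Ppoly hx hkn, show n - k = n - 1 - k + 1 by omega, hsum,
    hsign, if_congr (show (n : ℤ) - l = (n - 1 - k : ℕ) ↔ (k : ℤ) = l - 1 by omega) rfl rfl,
    if_congr (show (n : ℤ) - l = (n - 1 - k : ℕ) + 1 ↔ (k : ℤ) = l by omega) rfl rfl]
  ring
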